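/- Let ρ_A be a 2×2 complex matrix with real entries satisfying ρ_Aᵀ = ρ_A, and let χ be a 6×6 complex Hermitian matrix written in 3×3 blocks as χ = [[P, Q],[Qᴴ, R]] with P and R real symmetric and Q complex symmetric (Qᵀ = Q), such that both χ + (i/2)·(ρ_A ⊗ J̃) and χ − (i/2)·(ρ_A ⊗ J̃) are positive semidefinite. Define χ̄ := (χ + χ^{T_A})/2, where χ^{T_A} = [[P, Qᴴ],[Q, R]] is the partial transpose with respect to the block index. Then χ̄ is Hermitian, invariant under the partial transpose (χ̄^{T_A} = χ̄), has the same diagonal 3×3 blocks P and R as χ and the same (1,4) and (4,1) entries as χ whenever the (1,1) entry of Q is real, and both χ̄ + (i/2)·(ρ_A ⊗ J̃) and χ̄ − (i/2)·(ρ_A ⊗ J̃) are positive semidefinite. -/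

import Mathlib

open Matrix
open scoped ComplexOrder

/-!
Write `K = (i/2) ρ_A ⊗ J̃`. Since `ρ_A` is symmetric and `J̃` antisymmetric, `Kᵀ = -K`, so
transposing `χ - K ≥ 0` gives `χᵀ + K ≥ 0`. Because the blocks `P`, `Q`, `R` are symmetric,
`χᵀ` is the partial transpose of `χ`; hence `χ̄ + K` is the average of the positive semidefinite
matrices `χ + K` and `χᵀ + K`, and symmetrically for `χ̄ - K`. Hermiticity of `χ̄` follows since
`χ̄` is the average of `χ̄ + K` and `χ̄ - K`.
-/

/-- The Kronecker product `ρ ⊗ J` of a 2×2 matrix with a 3×3 matrix, written as a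
6×6 matrix in 3×3 blocks: `[[ρ₀₀·J, ρ₀₁·J],[ρ₁₀·J, ρ₁₁·J]]`. -/
def kronBlock (ρ : Matrix (Fin 2) (Fin 2) ℂ) (J : Matrix (Fin 3) (Fin 3) ℂ) :
    Matrix (Fin 3 ⊕ Fin 3) (Fin 3 ⊕ Fin 3) ℂ :=
  Matrix.fromBlocks (ρ 0 0 • J) (ρ 0 1 • J) (ρ 1 0 • J) (ρ 1 1 • J)

/-- The partial transpose of a 6×6 matrix (written in 3×3 blocks) with respect to
the first (block) factor: the off-diagonal blocks are swapped. -/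
def partialTransposeA (M : Matrix (Fin 3 ⊕ Fin 3) (Fin 3 ⊕ Fin 3) ℂ) :
    Matrix (Fin 3 ⊕ Fin 3) (Fin 3 ⊕ Fin 3) ℂ :=
  Matrix.fromBlocks M.toBlocks₁₁ M.toBlocks₂₁ M.toBlocks₁₂ M.toBlocks₂₂

lemma inv_two_smul_add_self {K M : Type*} [DivisionRing K] [CharZero K] [AddCommGroup M]
    [Module K M] (x : M) : (2 : K)⁻¹ • (x + x) = x := by
  rw [← two_smul K x, smul_smul, inv_mul_cancel₀ two_ne_zero, one_smul]

section PositiveSemidefinite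

variable {𝕜 n : Type*} [RCLike 𝕜]

lemma Matrix.PosSemidef.half_smul_add {A B : Matrix n n 𝕜} (hA : A.PosSemidef)
    (hB : B.PosSemidef) : ((2 : 𝕜)⁻¹ • (A + B)).PosSemidef :=
  (hA.add hB).smul (by positivity)

lemma Matrix.PosSemidef.of_add_of_sub {A B : Matrix n n 𝕜}
    (hplus : (A + B).PosSemidef) (hminus : (A - B).PosSemidef) : A.PosSemidef := by
  have h := hplus.half_smul_add hminus
  rwa [add_add_sub_cancel, inv_two_smul_add_self] at h

lemma Matrix.PosSemidef.transpose_add_of_sub {A B : Matrix n n 𝕜} (hB : Bᵀ = -B)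
    (h : (A - B).PosSemidef) : (Aᵀ + B).PosSemidef := by
  simpa [hB] using h.transpose

lemma Matrix.PosSemidef.half_smul_add_transpose_add {A B : Matrix n n 𝕜} (hB : Bᵀ = -B)
    (hplus : (A + B).PosSemidef) (hminus : (A - B).PosSemidef) :
    ((2 : 𝕜)⁻¹ • (A + Aᵀ) + B).PosSemidef := by
  convert hplus.half_smul_add (hminus.transpose_add_of_sub hB) using 1
  module

lemma Matrix.PosSemidef.half_smul_add_transpose_sub {A B : Matrix n n 𝕜} (hB : Bᵀ = -B)
    (hplus : (A + B).PosSemidef) (hminus : (A - B).PosSemidef) :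
    ((2 : 𝕜)⁻¹ • (A + Aᵀ) - B).PosSemidef := by
  rw [sub_eq_add_neg] at hminus ⊢
  exact half_smul_add_transpose_add (by rw [transpose_neg, hB]) hminus
    (by rwa [sub_neg_eq_add])

end PositiveSemidefinite

section Blocks

variable {A B C D : Matrix (Fin 3) (Fin 3) ℂ}

@[simp]
lemma partialTransposeA_fromBlocks :
    partialTransposeA (fromBlocks A B C D) = fromBlocks A C B D := by
  simp [partialTransposeA]

lemma partialTransposeA_partialTransposeA (M : Matrix (Fin 3 ⊕ Fin 3) (Fin 3 ⊕ Fin 3) ℂ) :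
    partialTransposeA (partialTransposeA M) = M := by
  simp [partialTransposeA, fromBlocks_toBlocks]

lemma partialTransposeA_add (M N : Matrix (Fin 3 ⊕ Fin 3) (Fin 3 ⊕ Fin 3) ℂ) :
    partialTransposeA (M + N) = partialTransposeA M + partialTransposeA N := by
  ext (i | i) (j | j) <;> rfl

lemma partialTransposeA_smul (c : ℂ) (M : Matrix (Fin 3 ⊕ Fin 3) (Fin 3 ⊕ Fin 3) ℂ) :
    partialTransposeA (c • M) = c • partialTransposeA M := by
  ext (i | i) (j | j) <;> rfl

lemma partialTransposeA_fromBlocks_eq_transpose (hA : Aᵀ = A) (hB : Bᵀ = B) (hC : Cᵀ = C)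
    (hD : Dᵀ = D) : partialTransposeA (fromBlocks A B C D) = (fromBlocks A B C D)ᵀ := by
  rw [fromBlocks_transpose, hA, hB, hC, hD, partialTransposeA_fromBlocks]

lemma kronBlock_transpose (ρ : Matrix (Fin 2) (Fin 2) ℂ) (J : Matrix (Fin 3) (Fin 3) ℂ) :
    (kronBlock ρ J)ᵀ = kronBlock ρᵀ Jᵀ := by
  simp [kronBlock, fromBlocks_transpose]

lemma kronBlock_neg_right (ρ : Matrix (Fin 2) (Fin 2) ℂ) (J : Matrix (Fin 3) (Fin 3) ℂ) :
    kronBlock ρ (-J) = -kronBlock ρ J := by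
  simp [kronBlock, fromBlocks_neg]

end Blocks

theorem ppt_symmetrized_solution_general
    (ρA : Matrix (Fin 2) (Fin 2) ℂ)
    (hsym : ρAᵀ = ρA)
    (Jt : Matrix (Fin 3) (Fin 3) ℂ)
    (hJ : Jt = !![0, 0, 0; 0, 0, -1; 0, 1, 0])
    (P R Q : Matrix (Fin 3) (Fin 3) ℂ)
    (hPsym : Pᵀ = P)
    (hRsym : Rᵀ = R)
    (hQsym : Qᵀ = Q)
    (χ : Matrix (Fin 3 ⊕ Fin 3) (Fin 3 ⊕ Fin 3) ℂ)
    (hχ : χ = Matrix.fromBlocks P Q Qᴴ R)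
    (hplus : (χ + (Complex.I / 2) • kronBlock ρA Jt).PosSemidef)
    (hminus : (χ - (Complex.I / 2) • kronBlock ρA Jt).PosSemidef)
    (χbar : Matrix (Fin 3 ⊕ Fin 3) (Fin 3 ⊕ Fin 3) ℂ)
    (hχbar : χbar = (2 : ℂ)⁻¹ • (χ + partialTransposeA χ)) :
    χbar.IsHermitian ∧
    partialTransposeA χbar = χbar ∧
    χbar.toBlocks₁₁ = P ∧ χbar.toBlocks₂₂ = R ∧
    ((Q 0 0).im = 0 →
      χbar (Sum.inl 0) (Sum.inr 0) = χ (Sum.inl 0) (Sum.inr 0) ∧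
      χbar (Sum.inr 0) (Sum.inl 0) = χ (Sum.inr 0) (Sum.inl 0)) ∧
    (χbar + (Complex.I / 2) • kronBlock ρA Jt).PosSemidef ∧
    (χbar - (Complex.I / 2) • kronBlock ρA Jt).PosSemidef := by
  have hJt : Jtᵀ = -Jt := by
    subst hJ
    ext i j
    fin_cases i <;> fin_cases j <;> simp
  have hK : ((Complex.I / 2) • kronBlock ρA Jt)ᵀ = -((Complex.I / 2) • kronBlock ρA Jt) := by
    rw [transpose_smul, kronBlock_transpose, hsym, hJt, kronBlock_neg_right, smul_neg]
  have hQH : Qᴴᵀ = Qᴴ := by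
    rw [← conjTranspose_transpose_eq_transpose_conjTranspose, hQsym]
  have hχbarT : χbar = (2 : ℂ)⁻¹ • (χ + χᵀ) := by
    rw [hχbar, hχ, partialTransposeA_fromBlocks_eq_transpose hPsym hQsym hQH hRsym]
  have hbar_plus := hχbarT ▸ hplus.half_smul_add_transpose_add hK hminus
  have hbar_minus := hχbarT ▸ hplus.half_smul_add_transpose_sub hK hminus
  refine ⟨(hbar_plus.of_add_of_sub hbar_minus).isHermitian, ?_, ?_, ?_, fun hQ00 => ?_,
    hbar_plus, hbar_minus⟩
  · rw [hχbar, partialTransposeA_smul, partialTransposeA_add,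
      partialTransposeA_partialTransposeA, add_comm]
  · rw [hχbar, hχ, partialTransposeA_fromBlocks, fromBlocks_add, fromBlocks_smul,
      toBlocks_fromBlocks₁₁, inv_two_smul_add_self]
  · rw [hχbar, hχ, partialTransposeA_fromBlocks, fromBlocks_add, fromBlocks_smul,
      toBlocks_fromBlocks₂₂, inv_two_smul_add_self]
  · have hQ00_conj : star (Q 0 0) = Q 0 0 := Complex.conj_eq_iff_im.mpr hQ00
    simp only [hχbar, hχ, partialTransposeA_fromBlocks, Matrix.smul_apply, Matrix.add_apply,
      fromBlocks_apply₁₂, fromBlocks_apply₂₁, conjTranspose_apply, hQ00_conj,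
      inv_two_smul_add_self, and_self]

/-- Lemma 2, matrix form: For `χ = [[P, Q],[Qᴴ, R]]` with `P`, `R`
real symmetric, `Q` complex symmetric, `ρ_A` real symmetric and
`χ ± (i/2)·(ρ_A ⊗ J̃) ≥ 0`, the matrix `χ̄ := (χ + χ^{T_A})/2` is Hermitian,
invariant under the partial transpose, has the same diagonal blocks `P`, `R`,
has the same (1,4) and (4,1) entries as `χ` whenever `Q₁₁` is real, and
satisfies `χ̄ ± (i/2)·(ρ_A ⊗ J̃) ≥ 0`. -/
theorem ppt_symmetrized_solution
    (ρA : Matrix (Fin 2) (Fin 2) ℂ)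
    (hreal : ∀ i j, (ρA i j).im = 0) (hsym : ρAᵀ = ρA)
    (Jt : Matrix (Fin 3) (Fin 3) ℂ)
    (hJ : Jt = !![0, 0, 0; 0, 0, -1; 0, 1, 0])
    (P R Q : Matrix (Fin 3) (Fin 3) ℂ)
    (hPreal : ∀ i j, (P i j).im = 0) (hPsym : Pᵀ = P)
    (hRreal : ∀ i j, (R i j).im = 0) (hRsym : Rᵀ = R)
    (hQsym : Qᵀ = Q)
    (χ : Matrix (Fin 3 ⊕ Fin 3) (Fin 3 ⊕ Fin 3) ℂ)
    (hχ : χ = Matrix.fromBlocks P Q Qᴴ R)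
    (hplus : (χ + (Complex.I / 2) • kronBlock ρA Jt).PosSemidef)
    (hminus : (χ - (Complex.I / 2) • kronBlock ρA Jt).PosSemidef)
    (χbar : Matrix (Fin 3 ⊕ Fin 3) (Fin 3 ⊕ Fin 3) ℂ)
    (hχbar : χbar = (2 : ℂ)⁻¹ • (χ + partialTransposeA χ)) :
    χbar.IsHermitian ∧
    partialTransposeA χbar = χbar ∧
    χbar.toBlocks₁₁ = P ∧ χbar.toBlocks₂₂ = R ∧
    ((Q 0 0).im = 0 →
      χbar (Sum.inl 0) (Sum.inr 0) = χ (Sum.inl 0) (Sum.inr 0) ∧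
      χbar (Sum.inr 0) (Sum.inl 0) = χ (Sum.inr 0) (Sum.inl 0)) ∧
    (χbar + (Complex.I / 2) • kronBlock ρA Jt).PosSemidef ∧
    (χbar - (Complex.I / 2) • kronBlock ρA Jt).PosSemidef :=
  ppt_symmetrized_solution_general ρA hsym Jt hJ P R Q hPsym hRsym hQsym χ hχ hplus hminus χbar
    hχbar
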